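/- Let P be a dynamic path instance with n ≥ 1 and let k ≥ 2 be an integer. Assume that strictly more than k vertices of P carry positive weight. Then the set S = { i : 0 ≤ i < n and Θ¹(P_{0,i}) < Θ^{k−1}(P_{i+1,n}) } is nonempty (in particular 0 ∈ S); let t = max S, so 0 ≤ t < n. Then Θᵏ(P_{0,n}) = min( Θ¹(P_{0,t+1}), Θ^{k−1}(P_{t+1,n}) ). -/

import Mathlib

/-- A dynamic path instance: `n+1` vertices at strictly increasing coordinates
`x 0 < x 1 < ⋯ < x n`, natural-number weights `w i`, positive integer capacities
`c j` (capacity of the edge from `x (j-1)` to `x j`, for `1 ≤ j ≤ n`), and a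
positive travel time `τ` per unit distance. -/
structure DPath where
  n : ℕ
  x : ℕ → ℝ
  w : ℕ → ℕ
  c : ℕ → ℕ
  τ : ℝ
  hx : ∀ i, i < n → x i < x (i + 1)
  hc : ∀ j, 1 ≤ j → j ≤ n → 0 < c j
  hτ : 0 < τ

/-- `P.W a i = w_a + ⋯ + w_i`. -/
def DPath.W (P : DPath) (a i : ℕ) : ℕ := ∑ j ∈ Finset.Icc a i, P.w j

/-- For a sink at `y` in subpath `P_{a,b}`: the minimum capacity
`min_{i+1 ≤ j ≤ k+1} c_j`, where `k` is the index with `x_k < y ≤ x_{k+1}`;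
the edges `j` with `i+1 ≤ j ≤ k+1` are exactly those with `i+1 ≤ j ≤ b` and
`x (j-1) < y`. -/
noncomputable def DPath.cL (P : DPath) (b : ℕ) (y : ℝ) (i : ℕ) : ℕ :=
  sInf (P.c '' {j | i + 1 ≤ j ∧ j ≤ b ∧ P.x (j - 1) < y})

/-- For a sink at `y` in subpath `P_{a,b}`: the minimum capacity
`min_{k+1 ≤ j ≤ i} c_j`, where `k` is the index with `x_k ≤ y < x_{k+1}`;
the edges `j` with `k+1 ≤ j ≤ i` are exactly those with `a+1 ≤ j ≤ i` and
`y < x j`. -/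
noncomputable def DPath.cR (P : DPath) (a : ℕ) (y : ℝ) (i : ℕ) : ℕ :=
  sInf (P.c '' {j | a + 1 ≤ j ∧ j ≤ i ∧ y < P.x j})

/-- Left evacuation time `Θ_L(P_{a,b}, y)`: the maximum, over indices `i` with
`a ≤ i ≤ b`, `x i < y` and `W_{a,i} ≥ 1`, of
`(y − x_i)·τ + ⌈W_{a,i} / min_{i+1 ≤ j ≤ k+1} c_j⌉ − 1`; it is `0` if no such
index exists. -/
noncomputable def ThetaL (P : DPath) (a b : ℕ) (y : ℝ) : ℝ :=
  sSup (insert 0 {t : ℝ | ∃ i, a ≤ i ∧ i ≤ b ∧ P.x i < y ∧ 1 ≤ P.W a i ∧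
    t = (y - P.x i) * P.τ + (⌈(P.W a i : ℝ) / (P.cL b y i : ℝ)⌉ : ℝ) - 1})

/-- Right evacuation time `Θ_R(P_{a,b}, y)`. -/
noncomputable def ThetaR (P : DPath) (a b : ℕ) (y : ℝ) : ℝ :=
  sSup (insert 0 {t : ℝ | ∃ i, a ≤ i ∧ i ≤ b ∧ y < P.x i ∧ 1 ≤ P.W i b ∧
    t = (P.x i - y) * P.τ + (⌈(P.W i b : ℝ) / (P.cR a y i : ℝ)⌉ : ℝ) - 1})

/-- Evacuation time of subpath `P_{a,b}` to sink `y`. -/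
noncomputable def Theta (P : DPath) (a b : ℕ) (y : ℝ) : ℝ :=
  max (ThetaL P a b y) (ThetaR P a b y)

/-- `Θ¹(P_{a,b})`: minimum 1-sink evacuation time of subpath `P_{a,b}`
over sinks `y ∈ [x_a, x_b]`. -/
noncomputable def Theta1 (P : DPath) (a b : ℕ) : ℝ :=
  sInf (Theta P a b '' Set.Icc (P.x a) (P.x b))

/-- `Θᵏ(P_{a,b})`: minimum over all partitions of `{a, …, b}` into at most `k`
nonempty intervals `[f j, f (j+1) - 1]`, of the maximum over the intervals of
`Θ¹`. -/
noncomputable def ThetaK (P : DPath) (k a b : ℕ) : ℝ :=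
  sInf {t : ℝ | ∃ (m : ℕ) (f : ℕ → ℕ), 1 ≤ m ∧ m ≤ k ∧
    f 0 = a ∧ f m = b + 1 ∧ (∀ j, j < m → f j < f (j + 1)) ∧
    t = ⨆ j : Fin m, Theta1 P (f j.val) (f (j.val + 1) - 1)}

/-!
`ThetaK` is the min–max cost of partitioning `{a, …, b}` into at most `k` intervals, each interval
costing its `Θ¹`, and the recurrence holds for every nonnegative interval cost that is monotone
under inclusion. Splitting off the first block `[a, s]` of a partition gives Bellman's recursion
`Θᵏ⁺¹(a, b) = min_s max (Θ¹(a, s), Θᵏ(s + 1, b))`; as `s` grows the first term increases and the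
second decreases, so the optimum sits at the crossing index `t`. `Θ¹` is monotone because
shrinking a subpath only drops evacuation terms, lowers prefix weights and raises bottleneck
capacities, while a sink outside a subpath is never better than its nearest endpoint.

For `0 ∈ S`: `Θ¹(P_{0,0}) = 0`, whereas by pigeonhole every partition of `P_{1,n}` into `k − 1`
blocks has a block containing two weighted vertices `p < q`; every sink is at distance at least
`(x_q − x_p) / 2` from `p` or from `q`, so that block has evacuation time at least
`τ (x_q − x_p) / 2`; as consecutive vertices are a positive distance apart, this bound is
uniform over all partitions.
-/

lemma ciSup_fin_succ_eq_max {m : ℕ} [Nonempty (Fin m)] (h : Fin (m + 1) → ℝ) :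
    ⨆ j, h j = max (h 0) (⨆ j : Fin m, h j.succ) :=
  le_antisymm
    (ciSup_le <| Fin.cases (le_max_left _ _) fun j =>
      le_max_of_le_right (Finite.le_ciSup (fun j : Fin m => h j.succ) j))
    (max_le (Finite.le_ciSup h 0) (ciSup_le fun j => Finite.le_ciSup h j.succ))

lemma card_filter_Ico_add {A : ℕ → Prop} [DecidablePred A] {a m b : ℕ} (ham : a ≤ m)
    (hmb : m ≤ b) :
    ((Finset.Ico a m).filter A).card + ((Finset.Ico m b).filter A).card =
      ((Finset.Ico a b).filter A).card := by
  simp only [Finset.card_filter]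
  exact Finset.sum_Ico_consecutive _ ham hmb

section Partition

variable (cost : ℕ → ℕ → ℝ)

def partitionCosts (k a b : ℕ) : Set ℝ :=
  {t : ℝ | ∃ (m : ℕ) (f : ℕ → ℕ), 1 ≤ m ∧ m ≤ k ∧
    f 0 = a ∧ f m = b + 1 ∧ (∀ j, j < m → f j < f (j + 1)) ∧
    t = ⨆ j : Fin m, cost (f j.val) (f (j.val + 1) - 1)}

noncomputable def minPartitionCost (k a b : ℕ) : ℝ :=
  sInf (partitionCosts cost k a b)

def MonoOnSubintervals (N : ℕ) : Prop :=
  ∀ ⦃a a' b' b : ℕ⦄, a ≤ a' → a' ≤ b' → b' ≤ b → b ≤ N → cost a' b' ≤ cost a b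

variable {cost}

lemma partitionCosts_zero (a b : ℕ) : partitionCosts cost 0 a b = ∅ :=
  Set.eq_empty_of_forall_notMem fun _ ⟨_, _, h1, h0, _⟩ => by omega

lemma partitionCosts_mono {k k' : ℕ} (hk : k ≤ k') (a b : ℕ) :
    partitionCosts cost k a b ⊆ partitionCosts cost k' a b :=
  fun _ ⟨m, f, h1, hm, h⟩ => ⟨m, f, h1, hm.trans hk, h⟩

lemma le_of_mem_partitionCosts {k a b : ℕ} {V : ℝ} (hV : V ∈ partitionCosts cost k a b) :
    a ≤ b := by
  obtain ⟨m, f, hm, -, hf0, hfm, hstep, -⟩ := hV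
  have := strictMonoOn_Iic_of_lt_succ hstep (Set.mem_Iic.2 m.zero_le) (Set.mem_Iic.2 le_rfl) hm
  omega

lemma mem_partitionCosts_succ_iff {k a b : ℕ} {V : ℝ} :
    V ∈ partitionCosts cost (k + 1) a b ↔ (a ≤ b ∧ V = cost a b) ∨
      ∃ s, a ≤ s ∧ s < b ∧ ∃ V' ∈ partitionCosts cost k (s + 1) b, V = max (cost a s) V' := by
  constructor
  · rintro ⟨m, f, hm, hmk, hf0, hfm, hstep, rfl⟩
    have hf1 : f 0 < f 1 := hstep 0 hm
    obtain rfl | hm1 := eq_or_ne m 1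
    · refine Or.inl ⟨by omega, ?_⟩
      rw [ciSup_unique]
      simp [hf0, hfm]
    · obtain ⟨m', rfl⟩ : ∃ m', m = m' + 1 := ⟨m - 1, by omega⟩
      have : Nonempty (Fin m') := ⟨⟨0, by omega⟩⟩
      have hV' : (⨆ j : Fin m', cost (f (j.val + 1)) (f (j.val + 1 + 1) - 1)) ∈
          partitionCosts cost k (f 1 - 1 + 1) b :=
        ⟨m', fun j => f (j + 1), by omega, by omega, by simp only [zero_add]; omega, hfm,
          fun j hj => hstep (j + 1) (by omega), rfl⟩
      refine Or.inr ⟨f 1 - 1, by omega, by have := le_of_mem_partitionCosts hV'; omega, _, hV', ?_⟩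
      rw [ciSup_fin_succ_eq_max]
      simp only [Fin.val_zero, Fin.val_succ, hf0]
  · rintro (⟨hab, rfl⟩ | ⟨s, has, hsb, V', ⟨m, f, hm, hmk, hf0, hfm, hstep, rfl⟩, rfl⟩)
    · refine ⟨1, fun | 0 => a | _ + 1 => b + 1, le_rfl, by omega, rfl, rfl,
        fun j hj => ?_, ?_⟩
      · obtain rfl : j = 0 := by omega
        show a < b + 1
        omega
      · rw [ciSup_unique]
        simp
    · have : Nonempty (Fin m) := ⟨⟨0, hm⟩⟩
      refine ⟨m + 1, fun | 0 => a | j + 1 => f j, by omega, by omega, rfl, hfm, ?_, ?_⟩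
      · rintro (_ | j) hj
        · show a < f 0
          omega
        · exact hstep j (by omega)
      · rw [ciSup_fin_succ_eq_max]
        simp [hf0]

lemma exists_mem_partitionCosts_le_of_le {N : ℕ} (hcost : MonoOnSubintervals cost N) :
    ∀ {k a a' b : ℕ} {V : ℝ}, a ≤ a' → a' ≤ b → b ≤ N → V ∈ partitionCosts cost k a b →
      ∃ W ∈ partitionCosts cost k a' b, W ≤ V := by
  intro k
  induction k with
  | zero => simp [partitionCosts_zero]
  | succ k ih =>
    intro a a' b V haa' ha'b hbN hV
    rcases mem_partitionCosts_succ_iff.1 hV with ⟨-, rfl⟩ | ⟨s, has, hsb, V', hV', rfl⟩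
    · exact ⟨cost a' b, mem_partitionCosts_succ_iff.2 (Or.inl ⟨ha'b, rfl⟩),
        hcost haa' ha'b le_rfl hbN⟩
    · by_cases ha's : a' ≤ s
      · exact ⟨max (cost a' s) V',
          mem_partitionCosts_succ_iff.2 (Or.inr ⟨s, ha's, hsb, V', hV', rfl⟩),
          max_le_max_right _ (hcost haa' ha's le_rfl (by omega))⟩
      · obtain ⟨W, hW, hWV'⟩ := ih (by omega) ha'b hbN hV'
        exact ⟨W, partitionCosts_mono k.le_succ _ _ hW, hWV'.trans (le_max_right _ _)⟩

/-- Pigeonhole: some interval of the partition contains two points of `A`. -/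
lemma le_of_mem_partitionCosts_of_lt_card {N : ℕ} {A : ℕ → Prop} [DecidablePred A] {ε : ℝ}
    (hcost : ∀ a b, b ≤ N → 1 < ((Finset.Ico a (b + 1)).filter A).card → ε ≤ cost a b) :
    ∀ {k a b : ℕ} {V : ℝ}, b ≤ N → k < ((Finset.Ico a (b + 1)).filter A).card →
      V ∈ partitionCosts cost k a b → ε ≤ V := by
  intro k
  induction k with
  | zero => simp [partitionCosts_zero]
  | succ k ih =>
    intro a b V hbN hcard hV
    rcases mem_partitionCosts_succ_iff.1 hV with ⟨-, rfl⟩ | ⟨s, has, hsb, V', hV', rfl⟩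
    · exact hcost a b hbN (by omega)
    · by_cases hs : 1 < ((Finset.Ico a (s + 1)).filter A).card
      · exact le_max_of_le_left (hcost a s (by omega) hs)
      · have := card_filter_Ico_add (A := A) (show a ≤ s + 1 by omega)
          (show s + 1 ≤ b + 1 by omega)
        exact le_max_of_le_right (ih hbN (by omega) hV')

lemma bddBelow_partitionCosts (hcost0 : ∀ a b, 0 ≤ cost a b) (k a b : ℕ) :
    BddBelow (partitionCosts cost k a b) :=
  ⟨0, fun _ ⟨_, _, _, _, _, _, _, ht⟩ => ht ▸ Real.iSup_nonneg fun _ => hcost0 _ _⟩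

lemma minPartitionCost_le (hcost0 : ∀ a b, 0 ≤ cost a b) {k a b : ℕ} {V : ℝ}
    (hV : V ∈ partitionCosts cost k a b) : minPartitionCost cost k a b ≤ V :=
  csInf_le (bddBelow_partitionCosts hcost0 k a b) hV

lemma minPartitionCost_succ_le (hcost0 : ∀ a b, 0 ≤ cost a b) {k a b : ℕ} (hab : a ≤ b) :
    minPartitionCost cost (k + 1) a b ≤ cost a b :=
  minPartitionCost_le hcost0 (mem_partitionCosts_succ_iff.2 (Or.inl ⟨hab, rfl⟩))

lemma minPartitionCost_anti_left (hcost0 : ∀ a b, 0 ≤ cost a b) {N : ℕ}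
    (hcost : MonoOnSubintervals cost N) {k a a' b : ℕ} (haa' : a ≤ a') (ha'b : a' ≤ b)
    (hbN : b ≤ N) : minPartitionCost cost (k + 1) a' b ≤ minPartitionCost cost (k + 1) a b :=
  le_csInf ⟨_, mem_partitionCosts_succ_iff.2 (Or.inl ⟨haa'.trans ha'b, rfl⟩)⟩ fun _ hV =>
    let ⟨_, hW, hWV⟩ := exists_mem_partitionCosts_le_of_le hcost haa' ha'b hbN hV
    (minPartitionCost_le hcost0 hW).trans hWV

lemma minPartitionCost_succ_le_max (hcost0 : ∀ a b, 0 ≤ cost a b) {k a s b : ℕ}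
    (has : a ≤ s) (hsb : s < b) :
    minPartitionCost cost (k + 2) a b ≤
      max (cost a s) (minPartitionCost cost (k + 1) (s + 1) b) := by
  have hne : (partitionCosts cost (k + 1) (s + 1) b).Nonempty :=
    ⟨_, mem_partitionCosts_succ_iff.2 (Or.inl ⟨hsb, rfl⟩)⟩
  rw [minPartitionCost, minPartitionCost, Monotone.map_csInf_of_continuousAt
    (f := max (cost a s)) (by fun_prop) (fun _ _ => max_le_max_left _) hne
    (bddBelow_partitionCosts hcost0 _ _ _)]
  refine csInf_le_csInf (bddBelow_partitionCosts hcost0 _ _ _) (hne.image _) ?_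
  rintro _ ⟨V, hV, rfl⟩
  exact mem_partitionCosts_succ_iff.2 (Or.inr ⟨s, has, hsb, V, hV, rfl⟩)

theorem minPartitionCost_succ_eq_min (hcost0 : ∀ a b, 0 ≤ cost a b) {N : ℕ}
    (hcost : MonoOnSubintervals cost N) {k a t b : ℕ} (hat : a ≤ t) (htb : t < b)
    (hbN : b ≤ N) (ht : cost a t < minPartitionCost cost (k + 1) (t + 1) b)
    (hmax : ∀ i, a ≤ i → i < b →
      cost a i < minPartitionCost cost (k + 1) (i + 1) b → i ≤ t) :
    minPartitionCost cost (k + 2) a b =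
      min (cost a (t + 1)) (minPartitionCost cost (k + 1) (t + 1) b) := by
  refine le_antisymm (le_min ?_ ?_) ?_
  · rcases (Nat.succ_le_of_lt htb).eq_or_lt with htb' | htb'
    · exact htb' ▸ minPartitionCost_succ_le hcost0 (by omega)
    · refine (minPartitionCost_succ_le_max hcost0 (by omega) htb').trans (max_le le_rfl ?_)
      exact not_lt.1 fun h => (hmax (t + 1) (by omega) htb' h).not_gt t.lt_succ_self
  · exact (minPartitionCost_succ_le_max hcost0 hat htb).trans (max_le ht.le le_rfl)
  · refine le_csInf ⟨_, mem_partitionCosts_succ_iff.2 (Or.inl ⟨by omega, rfl⟩)⟩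
      fun V hV => ?_
    rcases mem_partitionCosts_succ_iff.1 hV with ⟨-, rfl⟩ | ⟨s, has, hsb, V', hV', rfl⟩
    · exact min_le_of_left_le (hcost le_rfl (by omega) htb hbN)
    · by_cases hts : t + 1 ≤ s
      · exact min_le_of_left_le ((hcost le_rfl (by omega) hts (by omega)).trans (le_max_left _ _))
      · exact min_le_of_right_le
          ((minPartitionCost_anti_left hcost0 hcost (by omega) htb hbN).trans
            ((minPartitionCost_le hcost0 hV').trans (le_max_right _ _)))

end Partition

lemma sInf_image_pos {ι : Type*} {c : ι → ℕ} {S : Set ι} (hS : S.Nonempty)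
    (hc : ∀ j ∈ S, 0 < c j) : 0 < sInf (c '' S) := by
  obtain ⟨j, hj, hj'⟩ := Nat.sInf_mem (hS.image c)
  exact hj' ▸ hc j hj

lemma ceil_div_sInf_image_le {ι : Type*} {c : ι → ℕ} {S S' : Set ι} (hSS' : S ⊆ S')
    (hc : ∀ j ∈ S', 0 < c j) {u v : ℕ} (huv : u ≤ v) :
    (⌈(u : ℝ) / (sInf (c '' S) : ℕ)⌉ : ℝ) ≤
      ⌈(v : ℝ) / (sInf (c '' S') : ℕ)⌉ := by
  rcases S.eq_empty_or_nonempty with rfl | hS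
  · simp only [Set.image_empty, Nat.sInf_empty, Nat.cast_zero, div_zero, Int.ceil_zero,
      Int.cast_zero]
    exact_mod_cast Int.ceil_nonneg (by positivity)
  refine Int.cast_le.2 <| Int.ceil_mono (div_le_div₀ (by positivity) (by exact_mod_cast huv)
    (by exact_mod_cast sInf_image_pos (hS.mono hSS') hc) ?_)
  exact_mod_cast csInf_le_csInf (OrderBot.bddBelow _) (hS.image c) (Set.image_mono hSS')

lemma one_le_ceil_div_sInf_image {ι : Type*} {c : ι → ℕ} {S : Set ι} (hS : S.Nonempty)
    (hc : ∀ j ∈ S, 0 < c j) {u : ℕ} (hu : 1 ≤ u) :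
    (1 : ℝ) ≤ ⌈(u : ℝ) / (sInf (c '' S) : ℕ)⌉ := by
  exact_mod_cast Int.one_le_ceil_iff.2
    (div_pos (by exact_mod_cast hu) (by exact_mod_cast sInf_image_pos hS hc))

section BoundedMax

variable {a b : ℕ} {p q : ℕ → Prop} {F : ℕ → ℝ}

lemma bddAbove_insert_zero_setOf :
    BddAbove (insert (0 : ℝ) {t | ∃ i, a ≤ i ∧ i ≤ b ∧ p i ∧ q i ∧ t = F i}) :=
  (((Set.finite_Icc a b).image F).subset (by
    rintro _ ⟨i, h1, h2, -, -, rfl⟩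
    exact ⟨i, ⟨h1, h2⟩, rfl⟩)).insert 0 |>.bddAbove

lemma sSup_insert_zero_setOf_nonneg :
    0 ≤ sSup (insert (0 : ℝ) {t | ∃ i, a ≤ i ∧ i ≤ b ∧ p i ∧ q i ∧ t = F i}) :=
  le_csSup bddAbove_insert_zero_setOf (Set.mem_insert _ _)

lemma le_sSup_insert_zero_setOf {i : ℕ} (h1 : a ≤ i) (h2 : i ≤ b) (hp : p i) (hq : q i) :
    F i ≤ sSup (insert (0 : ℝ) {t | ∃ i, a ≤ i ∧ i ≤ b ∧ p i ∧ q i ∧ t = F i}) :=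
  le_csSup bddAbove_insert_zero_setOf (Set.mem_insert_of_mem _ ⟨i, h1, h2, hp, hq, rfl⟩)

lemma sSup_insert_zero_setOf_le {z : ℝ} (hz : 0 ≤ z)
    (h : ∀ i, a ≤ i → i ≤ b → p i → q i → F i ≤ z) :
    sSup (insert (0 : ℝ) {t | ∃ i, a ≤ i ∧ i ≤ b ∧ p i ∧ q i ∧ t = F i}) ≤ z :=
  csSup_le ⟨0, Set.mem_insert _ _⟩ <| by
    rintro _ (rfl | ⟨i, h1, h2, hp, hq, rfl⟩)
    exacts [hz, h i h1 h2 hp hq]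

end BoundedMax

namespace DPath

variable (P : DPath)

lemma x_strictMonoOn : StrictMonoOn P.x (Set.Iic P.n) :=
  strictMonoOn_Iic_of_lt_succ P.hx

lemma x_le_x {i j : ℕ} (hij : i ≤ j) (hj : j ≤ P.n) : P.x i ≤ P.x j :=
  P.x_strictMonoOn.monotoneOn (Set.mem_Iic.2 (hij.trans hj)) (Set.mem_Iic.2 hj) hij

lemma exists_pos_le_x_sub_x :
    ∃ δ > 0, ∀ p q, p < q → q ≤ P.n → δ ≤ P.x q - P.x p := by
  rcases Nat.eq_zero_or_pos P.n with hn | hn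
  · exact ⟨1, one_pos, fun _ _ _ _ => by omega⟩
  obtain ⟨i₀, hi₀n, hi₀⟩ :=
    (Finset.range P.n).exists_min_image (fun i => P.x (i + 1) - P.x i) ⟨0, Finset.mem_range.2 hn⟩
  refine ⟨P.x (i₀ + 1) - P.x i₀, sub_pos.2 (P.hx i₀ (Finset.mem_range.1 hi₀n)),
    fun p q hpq hq => ?_⟩
  have := hi₀ p (Finset.mem_range.2 (by omega))
  have := P.x_le_x (Nat.succ_le_of_lt hpq) hq
  linarith

lemma W_anti_left {a a' : ℕ} (h : a ≤ a') (i : ℕ) : P.W a' i ≤ P.W a i :=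
  Finset.sum_le_sum_of_subset (Finset.Icc_subset_Icc h le_rfl)

lemma W_mono_right (a : ℕ) {i i' : ℕ} (h : i ≤ i') : P.W a i ≤ P.W a i' :=
  Finset.sum_le_sum_of_subset (Finset.Icc_subset_Icc le_rfl h)

lemma w_le_W {a p i : ℕ} (ha : a ≤ p) (hp : p ≤ i) : P.w p ≤ P.W a i :=
  Finset.single_le_sum (fun _ _ => Nat.zero_le _) (Finset.mem_Icc.2 ⟨ha, hp⟩)

lemma ThetaL_nonneg (a b : ℕ) (y : ℝ) : 0 ≤ ThetaL P a b y := sSup_insert_zero_setOf_nonneg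

lemma ThetaR_nonneg (a b : ℕ) (y : ℝ) : 0 ≤ ThetaR P a b y := sSup_insert_zero_setOf_nonneg

lemma Theta_nonneg (a b : ℕ) (y : ℝ) : 0 ≤ Theta P a b y :=
  le_max_of_le_left (P.ThetaL_nonneg a b y)

lemma le_ThetaL {a b i : ℕ} {y : ℝ} (hai : a ≤ i) (hib : i ≤ b) (hxi : P.x i < y)
    (hW : 1 ≤ P.W a i) :
    (y - P.x i) * P.τ + (⌈(P.W a i : ℝ) / (P.cL b y i : ℝ)⌉ : ℝ) - 1 ≤
      ThetaL P a b y :=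
  le_sSup_insert_zero_setOf (p := fun i => P.x i < y) (q := fun i => 1 ≤ P.W a i)
    (F := fun i => (y - P.x i) * P.τ + (⌈(P.W a i : ℝ) / (P.cL b y i : ℝ)⌉ : ℝ) - 1)
    hai hib hxi hW

lemma le_ThetaR {a b i : ℕ} {y : ℝ} (hai : a ≤ i) (hib : i ≤ b) (hxi : y < P.x i)
    (hW : 1 ≤ P.W i b) :
    (P.x i - y) * P.τ + (⌈(P.W i b : ℝ) / (P.cR a y i : ℝ)⌉ : ℝ) - 1 ≤
      ThetaR P a b y :=
  le_sSup_insert_zero_setOf (p := fun i => y < P.x i) (q := fun i => 1 ≤ P.W i b)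
    (F := fun i => (P.x i - y) * P.τ + (⌈(P.W i b : ℝ) / (P.cR a y i : ℝ)⌉ : ℝ) - 1)
    hai hib hxi hW

lemma ThetaL_mono {a a' b' b : ℕ} {y' y : ℝ} (ha : a ≤ a') (hb : b' ≤ b) (hbn : b ≤ P.n)
    (hy : y' ≤ y) : ThetaL P a' b' y' ≤ ThetaL P a b y := by
  refine sSup_insert_zero_setOf_le (P.ThetaL_nonneg a b y) fun i hai hib hxi hWi => ?_
  have hterm := P.le_ThetaL (ha.trans hai) (hib.trans hb) (hxi.trans_le hy)
    (hWi.trans (P.W_anti_left ha i))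
  have hceil : (⌈(P.W a' i : ℝ) / (P.cL b' y' i : ℝ)⌉ : ℝ) ≤
      ⌈(P.W a i : ℝ) / (P.cL b y i : ℝ)⌉ := by
    unfold DPath.cL
    refine ceil_div_sInf_image_le ?_ ?_ (P.W_anti_left ha i)
    · exact fun j ⟨h1, h2, h3⟩ => ⟨h1, h2.trans hb, h3.trans_le hy⟩
    · exact fun j ⟨h1, h2, _⟩ => P.hc j (by omega) (h2.trans hbn)
  have := mul_le_mul_of_nonneg_right (sub_le_sub_right hy (P.x i)) P.hτ.le
  linarith

lemma ThetaR_mono {a a' b' b : ℕ} {y' y : ℝ} (ha : a ≤ a') (hb : b' ≤ b) (hbn : b ≤ P.n)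
    (hy : y ≤ y') : ThetaR P a' b' y' ≤ ThetaR P a b y := by
  refine sSup_insert_zero_setOf_le (P.ThetaR_nonneg a b y) fun i hai hib hxi hWi => ?_
  have hterm := P.le_ThetaR (ha.trans hai) (hib.trans hb) (hy.trans_lt hxi)
    (hWi.trans (P.W_mono_right i hb))
  have hceil : (⌈(P.W i b' : ℝ) / (P.cR a' y' i : ℝ)⌉ : ℝ) ≤
      ⌈(P.W i b : ℝ) / (P.cR a y i : ℝ)⌉ := by
    unfold DPath.cR
    refine ceil_div_sInf_image_le ?_ ?_ (P.W_mono_right i hb)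
    · exact fun j ⟨h1, h2, h3⟩ => ⟨by omega, h2, hy.trans_lt h3⟩
    · exact fun j ⟨h1, h2, _⟩ => P.hc j (by omega) (h2.trans (hib.trans (hb.trans hbn)))
  have := mul_le_mul_of_nonneg_right (sub_le_sub_left hy (P.x i)) P.hτ.le
  linarith

lemma ThetaL_eq_zero {a b : ℕ} {y : ℝ} (hbn : b ≤ P.n) (hy : y ≤ P.x a) :
    ThetaL P a b y = 0 :=
  (sSup_insert_zero_setOf_le le_rfl fun _ hai hib hxi _ =>
    absurd (hxi.trans_le hy) (not_lt.2 (P.x_le_x hai (hib.trans hbn)))).antisymm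
    (P.ThetaL_nonneg a b y)

lemma ThetaR_eq_zero {a b : ℕ} {y : ℝ} (hbn : b ≤ P.n) (hy : P.x b ≤ y) :
    ThetaR P a b y = 0 :=
  (sSup_insert_zero_setOf_le le_rfl fun _ _ hib hxi _ =>
    absurd (hy.trans_lt hxi) (not_lt.2 (P.x_le_x hib hbn))).antisymm
    (P.ThetaR_nonneg a b y)

lemma travel_le_ThetaL {a b p : ℕ} {y : ℝ} (hap : a ≤ p) (hpb : p < b) (hbn : b ≤ P.n)
    (hy : P.x p < y) (hw : 1 ≤ P.w p) : (y - P.x p) * P.τ ≤ ThetaL P a b y := by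
  have hW : 1 ≤ P.W a p := hw.trans (P.w_le_W hap le_rfl)
  have hterm := P.le_ThetaL hap hpb.le hy hW
  have hceil : (1 : ℝ) ≤ ⌈(P.W a p : ℝ) / (P.cL b y p : ℝ)⌉ := by
    unfold DPath.cL
    refine one_le_ceil_div_sInf_image ?_ ?_ hW
    · exact ⟨p + 1, le_rfl, hpb, hy⟩
    · exact fun j ⟨h1, h2, _⟩ => P.hc j (by omega) (h2.trans hbn)
  linarith

lemma travel_le_ThetaR {a b q : ℕ} {y : ℝ} (haq : a < q) (hqb : q ≤ b) (hbn : b ≤ P.n)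
    (hy : y < P.x q) (hw : 1 ≤ P.w q) : (P.x q - y) * P.τ ≤ ThetaR P a b y := by
  have hW : 1 ≤ P.W q b := hw.trans (P.w_le_W le_rfl hqb)
  have hterm := P.le_ThetaR haq.le hqb hy hW
  have hceil : (1 : ℝ) ≤ ⌈(P.W q b : ℝ) / (P.cR a y q : ℝ)⌉ := by
    unfold DPath.cR
    refine one_le_ceil_div_sInf_image ?_ ?_ hW
    · exact ⟨q, haq, le_rfl, hy⟩
    · exact fun j ⟨h1, h2, _⟩ => P.hc j (by omega) (h2.trans (hqb.trans hbn))
  linarith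

lemma Theta1_nonneg (a b : ℕ) : 0 ≤ Theta1 P a b :=
  Real.sInf_nonneg (by rintro _ ⟨y, -, rfl⟩; exact P.Theta_nonneg a b y)

lemma Theta1_le_Theta {a b : ℕ} {y : ℝ} (hy : y ∈ Set.Icc (P.x a) (P.x b)) :
    Theta1 P a b ≤ Theta P a b y :=
  csInf_le ⟨0, by rintro _ ⟨y, -, rfl⟩; exact P.Theta_nonneg a b y⟩ ⟨y, hy, rfl⟩

/-- Moving the sink from outside the path to the nearest endpoint can only help. -/
lemma Theta1_le_Theta_of_le {a b : ℕ} (hab : a ≤ b) (hbn : b ≤ P.n) (y : ℝ) :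
    Theta1 P a b ≤ Theta P a b y := by
  have hxab := P.x_le_x hab hbn
  rcases lt_or_ge y (P.x a) with hya | hay
  · calc Theta1 P a b ≤ Theta P a b (P.x a) := P.Theta1_le_Theta ⟨le_rfl, hxab⟩
      _ = ThetaR P a b (P.x a) := by
        rw [Theta, P.ThetaL_eq_zero hbn le_rfl, max_eq_right (P.ThetaR_nonneg a b _)]
      _ ≤ ThetaR P a b y := P.ThetaR_mono le_rfl le_rfl hbn hya.le
      _ ≤ Theta P a b y := le_max_right _ _
  rcases le_or_gt y (P.x b) with hyb | hby
  · exact P.Theta1_le_Theta ⟨hay, hyb⟩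
  · calc Theta1 P a b ≤ Theta P a b (P.x b) := P.Theta1_le_Theta ⟨hxab, le_rfl⟩
      _ = ThetaL P a b (P.x b) := by
        rw [Theta, P.ThetaR_eq_zero hbn le_rfl, max_eq_left (P.ThetaL_nonneg a b _)]
      _ ≤ ThetaL P a b y := P.ThetaL_mono le_rfl le_rfl hbn hby.le
      _ ≤ Theta P a b y := le_max_left _ _

lemma Theta1_monoOnSubintervals : MonoOnSubintervals (Theta1 P) P.n := by
  intro a a' b' b ha hab' hb hbn
  refine le_csInf ⟨_, P.x a, ⟨le_rfl, P.x_le_x (by omega) hbn⟩, rfl⟩ ?_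
  rintro _ ⟨y, -, rfl⟩
  exact (P.Theta1_le_Theta_of_le hab' (hb.trans hbn) y).trans
    (max_le_max (P.ThetaL_mono ha hb hbn le_rfl) (P.ThetaR_mono ha hb hbn le_rfl))

lemma Theta1_self {a : ℕ} (ha : a ≤ P.n) : Theta1 P a a = 0 := by
  refine le_antisymm ((P.Theta1_le_Theta ⟨le_rfl, le_rfl⟩).trans_eq ?_) (P.Theta1_nonneg a a)
  rw [Theta, P.ThetaL_eq_zero ha le_rfl, P.ThetaR_eq_zero ha le_rfl, max_self]

lemma half_gap_le_Theta1 {a p q b : ℕ} (hap : a ≤ p) (hpq : p < q) (hqb : q ≤ b)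
    (hbn : b ≤ P.n) (hwp : 1 ≤ P.w p) (hwq : 1 ≤ P.w q) :
    (P.x q - P.x p) * P.τ / 2 ≤ Theta1 P a b := by
  refine le_csInf ⟨_, P.x a, ⟨le_rfl, P.x_le_x (by omega) hbn⟩, rfl⟩ ?_
  rintro _ ⟨y, -, rfl⟩
  have hxpq : P.x p < P.x q :=
    P.x_strictMonoOn (Set.mem_Iic.2 (by omega)) (Set.mem_Iic.2 (by omega)) hpq
  have hτ := P.hτ.le
  rcases le_or_gt ((P.x p + P.x q) / 2) y with hy | hy
  · have := P.travel_le_ThetaL hap (by omega) hbn (by linarith) hwp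
    have := mul_le_mul_of_nonneg_right (show (P.x q - P.x p) / 2 ≤ y - P.x p by linarith) hτ
    exact le_max_of_le_left (by linarith)
  · have := P.travel_le_ThetaR (hap.trans_lt hpq) hqb hbn (by linarith) hwq
    have := mul_le_mul_of_nonneg_right (show (P.x q - P.x p) / 2 ≤ P.x q - y by linarith) hτ
    exact le_max_of_le_right (by linarith)

lemma exists_pos_le_Theta1_of_one_lt_card : ∃ ε > 0, ∀ a b, b ≤ P.n →
    1 < ((Finset.Ico a (b + 1)).filter (fun i => 1 ≤ P.w i)).card → ε ≤ Theta1 P a b := by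
  obtain ⟨δ, hδ, hδle⟩ := P.exists_pos_le_x_sub_x
  have hτ := P.hτ
  refine ⟨δ * P.τ / 2, by positivity, fun a b hbn hcard => ?_⟩
  obtain ⟨p, hp, q, hq, hpq⟩ := Finset.one_lt_card.1 hcard
  simp only [Finset.mem_filter, Finset.mem_Ico] at hp hq
  rcases hpq.lt_or_gt with h | h
  · refine le_trans ?_ (P.half_gap_le_Theta1 hp.1.1 h (by omega) hbn hp.2 hq.2)
    gcongr
    exact hδle p q h (by omega)
  · refine le_trans ?_ (P.half_gap_le_Theta1 hq.1.1 h (by omega) hbn hq.2 hp.2)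
    gcongr
    exact hδle q p h (by omega)

end DPath

lemma ThetaK_eq_minPartitionCost (P : DPath) (k a b : ℕ) :
    ThetaK P k a b = minPartitionCost (Theta1 P) k a b := rfl

theorem stmt16_general (P : DPath) (k : ℕ) (hk : 2 ≤ k)
    (hw : k < ((Finset.range (P.n + 1)).filter (fun i => 1 ≤ P.w i)).card) :
    -- 0 ∈ S (so S is nonempty)
    (Theta1 P 0 0 < ThetaK P (k - 1) 1 P.n) ∧
    -- for t = max S (so 0 ≤ t < n), the recurrence holds
    (∀ t, t < P.n → Theta1 P 0 t < ThetaK P (k - 1) (t + 1) P.n →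
      (∀ i, i < P.n → Theta1 P 0 i < ThetaK P (k - 1) (i + 1) P.n → i ≤ t) →
      ThetaK P k 0 P.n =
        min (Theta1 P 0 (t + 1)) (ThetaK P (k - 1) (t + 1) P.n)) := by
  obtain ⟨k, rfl⟩ : ∃ j, k = j + 2 := ⟨k - 2, by omega⟩
  simp only [ThetaK_eq_minPartitionCost, Nat.add_sub_cancel (n := k + 1) (m := 1)]
  refine ⟨?_, fun t htn ht hmax => minPartitionCost_succ_eq_min P.Theta1_nonneg
    P.Theta1_monoOnSubintervals t.zero_le htn le_rfl ht fun i _ => hmax i⟩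
  have hcard : k + 1 < ((Finset.Ico 1 (P.n + 1)).filter (fun i => 1 ≤ P.w i)).card := by
    have hsplit :=
      card_filter_Ico_add (A := fun i => 1 ≤ P.w i) zero_le_one (Nat.le_add_left 1 P.n)
    have hfirst := (Finset.card_filter_le (Finset.Ico 0 1) (fun i => 1 ≤ P.w i)).trans_eq
      (Nat.card_Ico 0 1)
    rw [Finset.range_eq_Ico] at hw
    omega
  have hn : 1 ≤ P.n := by
    have := (Finset.card_filter_le (Finset.Ico 1 (P.n + 1)) (fun i => 1 ≤ P.w i)).trans_eq
      (Nat.card_Ico 1 (P.n + 1))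
    omega
  obtain ⟨ε, hε, hεle⟩ := P.exists_pos_le_Theta1_of_one_lt_card
  rw [P.Theta1_self P.n.zero_le]
  exact hε.trans_le <| le_csInf ⟨_, mem_partitionCosts_succ_iff.2 (Or.inl ⟨hn, rfl⟩)⟩
    fun _ hV => le_of_mem_partitionCosts_of_lt_card hεle le_rfl hcard hV

/-- if strictly more than `k` vertices carry positive weight,
then `S = { i < n : Θ¹(P_{0,i}) < Θ^{k−1}(P_{i+1,n}) }` is nonempty (indeed
`0 ∈ S`), and for `t = max S`,
`Θᵏ(P_{0,n}) = min(Θ¹(P_{0,t+1}), Θ^{k−1}(P_{t+1,n}))`. -/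
theorem stmt16 (P : DPath) (hn : 1 ≤ P.n) (k : ℕ) (hk : 2 ≤ k)
    (hw : k < ((Finset.range (P.n + 1)).filter (fun i => 1 ≤ P.w i)).card) :
    -- 0 ∈ S (so S is nonempty)
    (Theta1 P 0 0 < ThetaK P (k - 1) 1 P.n) ∧
    -- for t = max S (so 0 ≤ t < n), the recurrence holds
    (∀ t, t < P.n → Theta1 P 0 t < ThetaK P (k - 1) (t + 1) P.n →
      (∀ i, i < P.n → Theta1 P 0 i < ThetaK P (k - 1) (i + 1) P.n → i ≤ t) →
      ThetaK P k 0 P.n =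
        min (Theta1 P 0 (t + 1)) (ThetaK P (k - 1) (t + 1) P.n)) :=
  stmt16_general P k hk hw
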